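/- For every f in C_Z([0,1]) and every natural n >= 1, the distance in the sup norm from f to the Bernstein lattice B_n satisfies d_infty(f, B_n) <= (9/4) omega_f(n^{-1/3}) + 2 n^{-1/3}. -/

import Mathlib

/-!
Write `f x - ∑ q k * b n k x` as the Bernstein error `f x - ∑ f (k/n) * b n k x`, which the
variance identity bounds by `(1 + 1/(4 n δ²)) ω(δ)`, plus `∑ (f (k/n) - q k) * b n k x`.
Take `q k = f 0` for `k ≤ m` and `q k = f 1` for `k ≥ n - m`, where `m = ⌊n^(2/3)⌋`; this costs
at most `ω(m/n) ≤ ω(n^(-1/3))`. In between, `q k` rounds `f (k/n)` plus the error carried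
so far, so the partial sums of `f (k/n) - q k` stay within `1/2`. Abel summation then bounds the
middle part by `1/2` times the maximum plus the total variation of `k ↦ b n k x`; this sequence is
unimodal, and Stirling's formula bounds it by `1 / √(min k (n - k)) ≤ n^(-1/3)` there.
-/

/-- Modulus of continuity of `f` on `[0,1]`. -/
noncomputable def modCont (f : ℝ → ℝ) (δ : ℝ) : ℝ :=
  sSup {d : ℝ | ∃ x ∈ Set.Icc (0:ℝ) 1, ∃ y ∈ Set.Icc (0:ℝ) 1,
    |x - y| ≤ δ ∧ d = |f x - f y|}

/-- Sup-distance of `f` to the Bernstein lattice of order `n`. -/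
noncomputable def distBernLattice (f : ℝ → ℝ) (n : ℕ) : ℝ :=
  sInf {e : ℝ | ∃ q : ℕ → ℤ, ∀ x ∈ Set.Icc (0:ℝ) 1,
    |f x - ∑ k ∈ Finset.range (n + 1),
        (q k : ℝ) * ((n.choose k : ℝ) * x ^ k * (1 - x) ^ (n - k))| ≤ e}

open Finset Real Nat

def UnimodalOn (g : ℕ → ℝ) (c d : ℕ) : Prop :=
  ∀ j k, c ≤ j → j ≤ k → k < d → g (j + 1) < g j → g (k + 1) ≤ g k

section Summation

variable {g S : ℕ → ℝ} {c d : ℕ}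

lemma sum_Ico_abs_sub_of_le (hcd : c ≤ d) (hg : ∀ k ∈ Ico c d, g k ≤ g (k + 1)) :
    ∑ k ∈ Ico c d, |g (k + 1) - g k| = g d - g c := by
  rw [← sum_Ico_sub g hcd]
  exact sum_congr rfl fun k hk => abs_of_nonneg (sub_nonneg.2 (hg k hk))

lemma sum_Ico_abs_sub_of_ge (hcd : c ≤ d) (hg : ∀ k ∈ Ico c d, g (k + 1) ≤ g k) :
    ∑ k ∈ Ico c d, |g (k + 1) - g k| = g c - g d := by
  have := sum_Ico_abs_sub_of_le (g := fun k => -g k) hcd fun k hk => neg_le_neg (hg k hk)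
  simp only [← neg_sub', abs_neg] at this
  rw [this, neg_sub]

lemma UnimodalOn.sum_Ico_abs_sub_le {M : ℝ} (hg : UnimodalOn g c d) (hcd : c ≤ d)
    (hg0 : ∀ k ∈ Icc c d, 0 ≤ g k) (hgM : ∀ k ∈ Icc c d, g k ≤ M) :
    ∑ k ∈ Ico c d, |g (k + 1) - g k| ≤ 2 * M := by
  have hc0 := hg0 c (mem_Icc.2 ⟨le_rfl, hcd⟩)
  have hd0 := hg0 d (mem_Icc.2 ⟨hcd, le_rfl⟩)
  by_cases hdesc : ∃ t, t ∈ Ico c d ∧ g (t + 1) < g t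
  · classical
    obtain ⟨htI, ht⟩ := Nat.find_spec hdesc
    obtain ⟨hct, htd⟩ := mem_Ico.1 htI
    -- split at the first strict decrease `t`: `g` increases before it and decreases after it
    have hup : ∀ k ∈ Ico c (Nat.find hdesc), g k ≤ g (k + 1) := fun k hk =>
      not_lt.1 fun h => Nat.find_min hdesc (mem_Ico.1 hk).2
        ⟨mem_Ico.2 ⟨(mem_Ico.1 hk).1, (mem_Ico.1 hk).2.trans htd⟩, h⟩
    have hdown : ∀ k ∈ Ico (Nat.find hdesc) d, g (k + 1) ≤ g k := fun k hk =>
      hg _ k hct (mem_Ico.1 hk).1 (mem_Ico.1 hk).2 ht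
    rw [← sum_Ico_consecutive _ hct htd.le, sum_Ico_abs_sub_of_le hct hup,
      sum_Ico_abs_sub_of_ge htd.le hdown]
    linarith [hgM _ (mem_Icc.2 ⟨hct, htd.le⟩)]
  · push Not at hdesc
    rw [sum_Ico_abs_sub_of_le hcd hdesc]
    linarith [hgM d (mem_Icc.2 ⟨hcd, le_rfl⟩), hgM c (mem_Icc.2 ⟨le_rfl, hcd⟩)]

lemma sum_Ioc_sub_mul_eq (hSc : S c = 0) (hcd : c ≤ d) :
    ∑ k ∈ Ioc c d, (S k - S (k - 1)) * g k =
      S d * g d + ∑ k ∈ Ico (c + 1) d, S k * (g k - g (k + 1)) := by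
  induction d, hcd using Nat.le_induction with
  | base => simp [hSc]
  | succ d hcd ih =>
    rw [sum_Ioc_succ_top hcd, ih, Nat.add_sub_cancel]
    rcases hcd.eq_or_lt with rfl | hlt
    · simp [hSc]
    · rw [sum_Ico_succ_top hlt]
      ring

lemma UnimodalOn.abs_sum_Ioc_sub_mul_le {s M : ℝ} (hg : UnimodalOn g (c + 1) d) (hcd : c < d)
    (hg0 : ∀ k ∈ Icc (c + 1) d, 0 ≤ g k) (hgM : ∀ k ∈ Icc (c + 1) d, g k ≤ M)
    (hSc : S c = 0) (hS : ∀ k, |S k| ≤ s) :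
    |∑ k ∈ Ioc c d, (S k - S (k - 1)) * g k| ≤ 3 * s * M := by
  have hd : d ∈ Icc (c + 1) d := mem_Icc.2 ⟨hcd, le_rfl⟩
  have hs : 0 ≤ s := (abs_nonneg _).trans (hS 0)
  have hvar := hg.sum_Ico_abs_sub_le hcd hg0 hgM
  rw [sum_Ioc_sub_mul_eq hSc hcd.le]
  calc |S d * g d + ∑ k ∈ Ico (c + 1) d, S k * (g k - g (k + 1))|
      ≤ |S d| * g d + ∑ k ∈ Ico (c + 1) d, |S k| * |g (k + 1) - g k| := by
        refine (abs_add_le _ _).trans (add_le_add ?_ ?_)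
        · rw [abs_mul, abs_of_nonneg (hg0 d hd)]
        · refine (abs_sum_le_sum_abs _ _).trans_eq (sum_congr rfl fun k _ => ?_)
          rw [abs_mul, abs_sub_comm]
    _ ≤ s * M + s * ∑ k ∈ Ico (c + 1) d, |g (k + 1) - g k| := by
        rw [mul_sum]
        gcongr with k
        · exact hg0 d hd
        · exact hS d
        · exact hgM d hd
        · exact hS k
    _ ≤ 3 * s * M := by nlinarith

end Summation

lemma factorial_le_exp_one_mul_sqrt {n : ℕ} (hn : n ≠ 0) :
    (n ! : ℝ) ≤ exp 1 * √n * (n / exp 1) ^ n := by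
  have hseq : Stirling.stirlingSeq n ≤ exp 1 / √2 := by
    obtain ⟨m, rfl⟩ := Nat.exists_eq_succ_of_ne_zero hn
    rw [← Stirling.stirlingSeq_one]
    exact Stirling.stirlingSeq'_antitone (Nat.zero_le m)
  have hfac : (n ! : ℝ) = Stirling.stirlingSeq n * (√2 * √n * (n / exp 1) ^ n) := by
    rw [Stirling.stirlingSeq, ← sqrt_mul zero_le_two]
    field_simp
  rw [hfac]
  calc _ ≤ exp 1 / √2 * (√2 * √n * (n / exp 1) ^ n) := by gcongr
    _ = _ := by field_simp

lemma choose_mul_pow_mul_pow_le {k l : ℕ} (hk : k ≠ 0) (hl : l ≠ 0) :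
    ((k + l).choose k : ℝ) * (k / (k + l)) ^ k * (l / (k + l)) ^ l ≤
      exp 1 / (2 * π) * √((k + l) / (k * l)) := by
  have hN := factorial_le_exp_one_mul_sqrt (n := k + l) (by omega)
  have hK := Stirling.le_factorial_stirling k
  have hL := Stirling.le_factorial_stirling l
  have hk' : (0:ℝ) < k := by positivity
  have hl' : (0:ℝ) < l := by positivity
  push_cast at hN
  rw [Nat.cast_add_choose]
  calc ((k + l)! / (k ! * l !) : ℝ) * (k / (k + l)) ^ k * (l / (k + l)) ^ l
      ≤ exp 1 * √(k + l) * ((k + l) / exp 1) ^ (k + l)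
          / (√(2 * π * k) * (k / exp 1) ^ k * (√(2 * π * l) * (l / exp 1) ^ l))
          * (k / (k + l)) ^ k * (l / (k + l)) ^ l := by gcongr
    _ = exp 1 / (2 * π) * √((k + l) / (k * l)) := by
      rw [sqrt_mul (by positivity : (0:ℝ) ≤ 2 * π) k, sqrt_mul (by positivity : (0:ℝ) ≤ 2 * π) l,
        sqrt_div (by positivity), sqrt_mul hk'.le, div_pow, div_pow, div_pow, div_pow, div_pow, pow_add, pow_add]
      field_simp
      exact (sq_sqrt (by positivity)).symm

noncomputable def bernsteinBasis (n k : ℕ) (x : ℝ) : ℝ :=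
  (n.choose k : ℝ) * x ^ k * (1 - x) ^ (n - k)

section BernsteinBasis

variable {n k : ℕ} {x : ℝ}

lemma bernsteinBasis_nonneg (hx : x ∈ Set.Icc (0:ℝ) 1) : 0 ≤ bernsteinBasis n k x := by
  have := sub_nonneg.2 hx.2
  have := hx.1
  unfold bernsteinBasis
  positivity

lemma sum_bernsteinBasis (n : ℕ) (x : ℝ) : ∑ k ∈ range (n + 1), bernsteinBasis n k x = 1 := by
  rw [← one_pow (M := ℝ) n, ← add_sub_cancel x 1, add_pow]
  exact sum_congr rfl fun k _ => by unfold bernsteinBasis; ring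

lemma sum_sq_sub_mul_bernsteinBasis (hn : n ≠ 0) (hx : x ∈ Set.Icc (0:ℝ) 1) :
    ∑ k ∈ range (n + 1), (x - k / n) ^ 2 * bernsteinBasis n k x = x * (1 - x) / n := by
  rw [← bernstein.variance hn ⟨x, hx⟩, Finset.sum_range]
  simp [bernstein.z, bernstein_apply, bernsteinBasis]

lemma bernsteinBasis_succ_mul (hk : k < n) (x : ℝ) :
    bernsteinBasis n (k + 1) x * ((k + 1) * (1 - x)) = bernsteinBasis n k x * ((n - k : ℕ) * x) := by
  obtain ⟨l, rfl⟩ := Nat.exists_eq_add_of_lt hk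
  have hc : ((k + l + 1).choose (k + 1) : ℝ) * (k + 1) = (k + l + 1).choose k * (l + 1) := by
    exact_mod_cast (show k + l + 1 - k = l + 1 by omega) ▸ Nat.choose_succ_right_eq (k + l + 1) k
  simp only [bernsteinBasis, show k + l + 1 - (k + 1) = l by omega,
    show k + l + 1 - k = l + 1 by omega]
  push_cast
  linear_combination (x ^ k * x * (1 - x) ^ l * (1 - x)) * hc

lemma bernsteinBasis_unimodalOn (hx : x ∈ Set.Icc (0:ℝ) 1) (c : ℕ) {d : ℕ} (hd : d ≤ n) :
    UnimodalOn (fun k => bernsteinBasis n k x) c d := by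
  intro j k _ hjk hkd hdesc
  have hjn : j < n := by omega
  have hkn : k < n := by omega
  have hx1 : 0 < 1 - x := by
    refine sub_pos.2 (hx.2.lt_of_ne fun h1 => hdesc.not_ge ?_)
    have : bernsteinBasis n j 1 = 0 := by simp [bernsteinBasis, Nat.sub_ne_zero_of_lt hjn]
    simpa only [h1, this] using bernsteinBasis_nonneg (by simp)
  have hpj : 0 < bernsteinBasis n j x := (bernsteinBasis_nonneg hx).trans_lt hdesc
  have hratio_j := bernsteinBasis_succ_mul hjn x
  have hratio_k := bernsteinBasis_succ_mul hkn x
  have hj : ((n - j : ℕ) : ℝ) * x < (j + 1) * (1 - x) := by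
    refine lt_of_mul_lt_mul_left ?_ hpj.le
    rw [← hratio_j]
    exact mul_lt_mul_of_pos_right hdesc (by positivity)
  have hk : ((n - k : ℕ) : ℝ) * x ≤ (k + 1) * (1 - x) := by
    have : ((n - k : ℕ) : ℝ) ≤ (n - j : ℕ) := by gcongr
    have : (j : ℝ) ≤ k := by exact_mod_cast hjk
    nlinarith [hx.1]
  refine le_of_mul_le_mul_right ?_ (by positivity : (0:ℝ) < (k + 1) * (1 - x))
  rw [hratio_k]
  exact mul_le_mul_of_nonneg_left hk (bernsteinBasis_nonneg hx)

lemma pow_mul_one_sub_pow_le {k l : ℕ} (hk : k ≠ 0) (hl : l ≠ 0) (hx : x ∈ Set.Icc (0:ℝ) 1) :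
    x ^ k * (1 - x) ^ l ≤ (k / (k + l)) ^ k * (l / (k + l)) ^ l := by
  have hk' : (0:ℝ) < k := by positivity
  have hl' : (0:ℝ) < l := by positivity
  have hN : (0:ℝ) < k + l := by positivity
  set A := x * (k + l) / k
  set B := (1 - x) * (k + l) / l
  have hA : 0 ≤ A := by have := hx.1; positivity
  have hB : 0 ≤ B := by have := sub_nonneg.2 hx.2; positivity
  -- weighted AM-GM with weights `k/(k+l)`, `l/(k+l)`; the arithmetic mean is `x + (1 - x) = 1`
  have hamgm : A ^ ((k:ℝ) / (k + l)) * B ^ ((l:ℝ) / (k + l)) ≤ 1 := by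
    convert geom_mean_le_arith_mean2_weighted (by positivity) (by positivity) hA hB
      (by field_simp : (k:ℝ) / (k + l) + l / (k + l) = 1) using 1
    simp only [A, B]
    field_simp
    ring
  have hAB : A ^ k * B ^ l ≤ 1 := by
    have := pow_le_one₀ (by positivity) hamgm (n := k + l)
    rwa [mul_pow, ← rpow_mul_natCast hA, ← rpow_mul_natCast hB, Nat.cast_add, div_mul_cancel₀ _ hN.ne',
      div_mul_cancel₀ _ hN.ne', rpow_natCast, rpow_natCast] at this
  calc x ^ k * (1 - x) ^ l = A ^ k * B ^ l * ((k / (k + l)) ^ k * (l / (k + l)) ^ l) := by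
        simp only [A, B, div_pow, mul_pow]
        field_simp
    _ ≤ (k / (k + l)) ^ k * (l / (k + l)) ^ l := mul_le_of_le_one_left (by positivity) hAB

lemma bernsteinBasis_add_le_inv_sqrt {k l : ℕ} {t : ℝ} (ht : 0 < t) (hk : t < k) (hl : t < l)
    (hx : x ∈ Set.Icc (0:ℝ) 1) : bernsteinBasis (k + l) k x ≤ (√t)⁻¹ := by
  have hk' : (0:ℝ) < k := ht.trans hk
  have hl' : (0:ℝ) < l := ht.trans hl
  have hsum : ((k:ℝ) + l) / (k * l) ≤ 2 / t := by
    rw [div_le_div_iff₀ (by positivity) ht]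
    nlinarith
  have hconst : exp 1 * √2 ≤ 2 * π := by
    have h2 : √2 < 1.415 := by
      rw [sqrt_lt' (by norm_num)]
      norm_num
    nlinarith [exp_one_lt_d9, pi_gt_d2, exp_pos 1]
  calc bernsteinBasis (k + l) k x = (k + l).choose k * (x ^ k * (1 - x) ^ l) := by
        simp [bernsteinBasis, mul_assoc]
    _ ≤ (k + l).choose k * ((k / (k + l)) ^ k * (l / (k + l)) ^ l) :=
        mul_le_mul_of_nonneg_left
          (pow_mul_one_sub_pow_le (Nat.cast_pos.1 hk').ne' (Nat.cast_pos.1 hl').ne' hx) (by positivity)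
    _ ≤ exp 1 / (2 * π) * √((k + l) / (k * l)) := by
        rw [← mul_assoc]
        exact choose_mul_pow_mul_pow_le (Nat.cast_pos.1 hk').ne' (Nat.cast_pos.1 hl').ne'
    _ ≤ exp 1 / (2 * π) * √(2 / t) := by gcongr
    _ = exp 1 * √2 / (2 * π) * (√t)⁻¹ := by
        rw [sqrt_div zero_le_two]
        ring
    _ ≤ (√t)⁻¹ := mul_le_of_le_one_left (by positivity) ((div_le_one (by positivity)).2 hconst)

end BernsteinBasis

section ModulusOfContinuity

variable {f : ℝ → ℝ} {δ x y : ℝ}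

lemma abs_sub_le_modCont (hf : ContinuousOn f (Set.Icc 0 1)) (hx : x ∈ Set.Icc (0:ℝ) 1)
    (hy : y ∈ Set.Icc (0:ℝ) 1) (hxy : |x - y| ≤ δ) : |f x - f y| ≤ modCont f δ := by
  obtain ⟨C, hC⟩ := isCompact_Icc.exists_bound_of_continuousOn hf
  refine le_csSup ⟨2 * C, ?_⟩ ⟨x, hx, y, hy, hxy, rfl⟩
  rintro d ⟨x', hx', y', hy', -, rfl⟩
  have h1 := hC x' hx'
  have h2 := hC y' hy'
  rw [Real.norm_eq_abs] at h1 h2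
  linarith [abs_sub (f x') (f y')]

lemma modCont_nonneg (hf : ContinuousOn f (Set.Icc 0 1)) (hδ : 0 ≤ δ) : 0 ≤ modCont f δ :=
  (abs_nonneg _).trans (abs_sub_le_modCont hf (x := 0) (y := 0) (by simp) (by simp) (by simpa))

lemma abs_sub_le_natCast_mul_modCont (hf : ContinuousOn f (Set.Icc 0 1)) {m : ℕ} (hm : m ≠ 0)
    (hx : x ∈ Set.Icc (0:ℝ) 1) (hy : y ∈ Set.Icc (0:ℝ) 1) (hxy : |x - y| ≤ m * δ) :
    |f x - f y| ≤ m * modCont f δ := by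
  have hm' : (0:ℝ) < m := by positivity
  set t : ℕ → ℝ := fun i => x + ((i:ℝ) / m) • (y - x)
  have ht : ∀ i ≤ m, t i ∈ Set.Icc (0:ℝ) 1 := fun i hi => by
    have hi' : (i:ℝ) / m ∈ Set.Icc (0:ℝ) 1 := ⟨by positivity, (div_le_one hm').2 (by exact_mod_cast hi)⟩
    exact (convex_Icc 0 1).add_smul_sub_mem hx hy hi'
  have hstep : ∀ i, |t i - t (i + 1)| ≤ δ := fun i => by
    have : t i - t (i + 1) = (x - y) / m := by
      simp only [t, smul_eq_mul]
      push_cast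
      field_simp
      ring
    rw [this, abs_div, abs_of_pos hm', div_le_iff₀ hm', mul_comm]
    exact hxy
  calc |f x - f y| = |∑ i ∈ range m, (f (t i) - f (t (i + 1)))| := by
        rw [sum_range_sub' (fun i => f (t i))]
        simp [t, hm'.ne']
    _ ≤ ∑ i ∈ range m, |f (t i) - f (t (i + 1))| := abs_sum_le_sum_abs _ _
    _ ≤ ∑ _i ∈ range m, modCont f δ := sum_le_sum fun i hi =>
        abs_sub_le_modCont hf (ht i (mem_range.1 hi).le) (ht (i + 1) (mem_range.1 hi)) (hstep i)
    _ = m * modCont f δ := by simp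

lemma abs_sub_le_one_add_sq_div_mul_modCont (hf : ContinuousOn f (Set.Icc 0 1)) (hδ : 0 < δ)
    (hx : x ∈ Set.Icc (0:ℝ) 1) (hy : y ∈ Set.Icc (0:ℝ) 1) :
    |f x - f y| ≤ (1 + (x - y) ^ 2 / δ ^ 2) * modCont f δ := by
  set r := |x - y| / δ
  have hr : 0 ≤ r := by positivity
  have hxy : |x - y| ≤ (⌊r⌋₊ + 1 : ℕ) * δ := by
    rw [← div_le_iff₀ hδ]
    exact_mod_cast (Nat.lt_floor_add_one r).le
  have hfloor : (⌊r⌋₊ : ℝ) ≤ r ^ 2 := by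
    rcases lt_or_ge r 1 with h | h
    · simp [Nat.floor_eq_zero.2 h, sq_nonneg]
    · nlinarith [Nat.floor_le hr]
  have hr2 : r ^ 2 = (x - y) ^ 2 / δ ^ 2 := by rw [div_pow, sq_abs]
  calc |f x - f y| ≤ (⌊r⌋₊ + 1 : ℕ) * modCont f δ :=
        abs_sub_le_natCast_mul_modCont hf (Nat.succ_ne_zero _) hx hy hxy
    _ ≤ (1 + (x - y) ^ 2 / δ ^ 2) * modCont f δ := by
        gcongr
        · exact modCont_nonneg hf hδ.le
        · push_cast
          linarith

end ModulusOfContinuity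

lemma abs_sub_sum_mul_bernsteinBasis_le {f : ℝ → ℝ} {n : ℕ} {δ x : ℝ}
    (hf : ContinuousOn f (Set.Icc 0 1)) (hn : n ≠ 0) (hδ : 0 < δ) (hx : x ∈ Set.Icc (0:ℝ) 1) :
    |f x - ∑ k ∈ range (n + 1), f (k / n) * bernsteinBasis n k x| ≤
      (1 + 1 / (4 * n * δ ^ 2)) * modCont f δ := by
  have hb : ∀ k, 0 ≤ bernsteinBasis n k x := fun k => bernsteinBasis_nonneg hx
  have hω := modCont_nonneg hf hδ.le
  have hxx : x * (1 - x) ≤ 1 / 4 := by nlinarith [sq_nonneg (x - 1 / 2)]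
  calc |f x - ∑ k ∈ range (n + 1), f (k / n) * bernsteinBasis n k x|
      = |∑ k ∈ range (n + 1), (f x - f (k / n)) * bernsteinBasis n k x| := by
        simp_rw [sub_mul, sum_sub_distrib, ← mul_sum, sum_bernsteinBasis, mul_one]
    _ ≤ ∑ k ∈ range (n + 1), |f x - f (k / n)| * bernsteinBasis n k x := by
        refine (abs_sum_le_sum_abs _ _).trans_eq (sum_congr rfl fun k _ => ?_)
        rw [abs_mul, abs_of_nonneg (hb k)]
    _ ≤ ∑ k ∈ range (n + 1), modCont f δ *
          (bernsteinBasis n k x + (x - k / n) ^ 2 * bernsteinBasis n k x / δ ^ 2) := by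
        refine sum_le_sum fun k hk => ?_
        have hkn : (k : ℝ) / n ∈ Set.Icc (0:ℝ) 1 :=
          ⟨by positivity, div_le_one_of_le₀ (by exact_mod_cast mem_range_succ_iff.1 hk) (by positivity)⟩
        calc |f x - f (k / n)| * bernsteinBasis n k x
            ≤ (1 + (x - k / n) ^ 2 / δ ^ 2) * modCont f δ * bernsteinBasis n k x := by
              gcongr
              · exact hb k
              · exact abs_sub_le_one_add_sq_div_mul_modCont hf hδ hx hkn
          _ = _ := by ring
    _ = modCont f δ * (1 + x * (1 - x) / n / δ ^ 2) := by
        rw [← mul_sum, sum_add_distrib, ← sum_div, sum_bernsteinBasis,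
          sum_sq_sub_mul_bernsteinBasis hn hx]
    _ ≤ (1 + 1 / (4 * n * δ ^ 2)) * modCont f δ := by
        rw [mul_comm, div_div]
        gcongr (1 + ?_) * _
        rw [div_le_div_iff₀ (by positivity) (by positivity)]
        nlinarith [show (0:ℝ) < n * δ ^ 2 by positivity]

/-- `.1` is the coefficient `q k`; `.2` is the running sum of `F j - q j` over the middle indices
`m < j ≤ k`, which rounding `F k` plus this carried error keeps within `1/2`. -/
noncomputable def roundingScheme (F : ℕ → ℝ) (a b : ℤ) (m n : ℕ) : ℕ → ℤ × ℝ
  | 0 => (a, 0)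
  | k + 1 =>
    if k + 1 ≤ m then (a, 0)
    else if n - m ≤ k + 1 then (b, (roundingScheme F a b m n k).2)
    else (round ((roundingScheme F a b m n k).2 + F (k + 1)),
      (roundingScheme F a b m n k).2 + F (k + 1) - round ((roundingScheme F a b m n k).2 + F (k + 1)))

section RoundingScheme

variable {F : ℕ → ℝ} {a b : ℤ} {m n k : ℕ}

lemma roundingScheme_of_le (hk : k ≤ m) : roundingScheme F a b m n k = (a, 0) := by
  cases k with
  | zero => rfl
  | succ k => rw [roundingScheme, if_pos hk]

lemma roundingScheme_fst_of_le (hmk : m < k) (hk : n - m ≤ k) : (roundingScheme F a b m n k).1 = b := by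
  cases k with
  | zero => omega
  | succ k => rw [roundingScheme, if_neg (by omega), if_pos hk]

lemma abs_roundingScheme_snd_le (k : ℕ) : |(roundingScheme F a b m n k).2| ≤ 1 / 2 := by
  induction k with
  | zero => norm_num [roundingScheme]
  | succ k ih =>
    rw [roundingScheme]
    split_ifs
    · norm_num
    · exact ih
    · exact abs_sub_round _

lemma sub_roundingScheme_fst (hmk : m < k) (hk : k < n - m) :
    F k - (roundingScheme F a b m n k).1 =
      (roundingScheme F a b m n k).2 - (roundingScheme F a b m n (k - 1)).2 := by
  cases k with
  | zero => omega
  | succ k =>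
    rw [roundingScheme, if_neg (by omega), if_neg (by omega), Nat.add_sub_cancel]
    ring

end RoundingScheme

section LatticeApproximation

variable {n : ℕ} {x : ℝ}

lemma abs_sum_mul_bernsteinBasis_le {s : Finset ℕ} {c : ℕ → ℝ} {C : ℝ} (hs : s ⊆ range (n + 1))
    (hC : 0 ≤ C) (hc : ∀ k ∈ s, |c k| ≤ C) (hx : x ∈ Set.Icc (0:ℝ) 1) :
    |∑ k ∈ s, c k * bernsteinBasis n k x| ≤ C := by
  have hb : ∀ k, 0 ≤ bernsteinBasis n k x := fun k => bernsteinBasis_nonneg hx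
  calc |∑ k ∈ s, c k * bernsteinBasis n k x| ≤ ∑ k ∈ s, |c k| * bernsteinBasis n k x := by
        refine (abs_sum_le_sum_abs _ _).trans_eq (sum_congr rfl fun k _ => ?_)
        rw [abs_mul, abs_of_nonneg (hb k)]
    _ ≤ ∑ k ∈ s, C * bernsteinBasis n k x := by gcongr with k hk; exacts [hb k, hc k hk]
    _ ≤ ∑ k ∈ range (n + 1), C * bernsteinBasis n k x :=
        sum_le_sum_of_subset_of_nonneg hs fun k _ _ => mul_nonneg hC (hb k)
    _ = C := by rw [← mul_sum, sum_bernsteinBasis, mul_one]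

lemma abs_sub_roundingScheme_fst_le {f : ℝ → ℝ} {a b : ℤ} {m k : ℕ} {δ : ℝ}
    (hf : ContinuousOn f (Set.Icc 0 1)) (ha : f 0 = a) (hb : f 1 = b) (hn : n ≠ 0)
    (hm : (m : ℝ) ≤ n * δ) (hk : k ∈ range (n + 1) \ Ioc m (n - m - 1)) :
    |f (k / n) - (roundingScheme (fun k : ℕ => f (k / n)) a b m n k).1| ≤ modCont f δ := by
  have hn' : (0:ℝ) < n := by positivity
  simp only [mem_sdiff, mem_range, mem_Ioc, not_and, not_le] at hk
  have hkn : (k : ℝ) ≤ n := by exact_mod_cast (by omega : k ≤ n)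
  have hkI : (k : ℝ) / n ∈ Set.Icc (0:ℝ) 1 := ⟨by positivity, div_le_one_of_le₀ hkn hn'.le⟩
  rcases le_or_gt k m with hkm | hkm
  · rw [roundingScheme_of_le hkm, ← ha]
    refine abs_sub_le_modCont hf hkI (by simp) ?_
    rw [sub_zero, abs_of_nonneg (by positivity), div_le_iff₀ hn', mul_comm]
    exact le_trans (by exact_mod_cast hkm) hm
  · rw [roundingScheme_fst_of_le hkm (by omega), ← hb]
    refine abs_sub_le_modCont hf hkI (by simp) ?_
    rw [abs_sub_comm, abs_of_nonneg (by simpa using div_le_one_of_le₀ hkn hn'.le),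
      one_sub_div hn'.ne', div_le_iff₀ hn', mul_comm]
    refine le_trans ?_ hm
    rw [sub_le_iff_le_add, ← Nat.cast_add, Nat.cast_le]
    omega

lemma abs_sum_sub_roundingScheme_fst_mul_le {F : ℕ → ℝ} {a b : ℤ} {u : ℝ} (hu : 0 < u)
    (hx : x ∈ Set.Icc (0:ℝ) 1) :
    |∑ k ∈ Ioc ⌊u ^ 2⌋₊ (n - ⌊u ^ 2⌋₊ - 1),
        (F k - (roundingScheme F a b ⌊u ^ 2⌋₊ n k).1) * bernsteinBasis n k x| ≤ 3 / (2 * u) := by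
  set m := ⌊u ^ 2⌋₊
  rcases le_or_gt (n - m - 1) m with h | h
  · rw [Ioc_eq_empty_of_le h, sum_empty, abs_zero]
    positivity
  have hu2 : u ^ 2 < m + 1 := Nat.lt_floor_add_one _
  have hbound : ∀ k ∈ Icc (m + 1) (n - m - 1), bernsteinBasis n k x ≤ u⁻¹ := fun k hk => by
    obtain ⟨hk1, hk2⟩ := mem_Icc.1 hk
    have hk : u ^ 2 < k := hu2.trans_le (by exact_mod_cast hk1)
    have hl : u ^ 2 < (n - k : ℕ) := hu2.trans_le (by exact_mod_cast (by omega : m + 1 ≤ n - k))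
    have := bernsteinBasis_add_le_inv_sqrt (by positivity) hk hl hx
    rwa [Nat.add_sub_cancel' (by omega), sqrt_sq hu.le] at this
  rw [sum_congr rfl fun k hk => by
    rw [sub_roundingScheme_fst (mem_Ioc.1 hk).1 (by have := (mem_Ioc.1 hk).2; omega)]]
  calc _ ≤ 3 * (1 / 2) * u⁻¹ :=
        (bernsteinBasis_unimodalOn hx (m + 1) (by omega)).abs_sum_Ioc_sub_mul_le h
          (fun k _ => bernsteinBasis_nonneg hx) hbound (by rw [roundingScheme_of_le le_rfl])
          abs_roundingScheme_snd_le
    _ = 3 / (2 * u) := by field_simp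

lemma abs_sub_sum_roundingScheme_mul_bernsteinBasis_le {f : ℝ → ℝ} {a b : ℤ} {u : ℝ}
    (hf : ContinuousOn f (Set.Icc 0 1)) (ha : f 0 = a) (hb : f 1 = b) (hu : 1 ≤ u)
    (hun : (n : ℝ) = u ^ 3) (hx : x ∈ Set.Icc (0:ℝ) 1) :
    |f x - ∑ k ∈ range (n + 1),
        ((roundingScheme (fun k : ℕ => f (k / n)) a b ⌊u ^ 2⌋₊ n k).1 : ℝ) * bernsteinBasis n k x| ≤
      9 / 4 * modCont f u⁻¹ + 2 * u⁻¹ := by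
  have hn : n ≠ 0 := (Nat.cast_pos.1 (by rw [hun]; positivity : (0:ℝ) < n)).ne'
  have hω := modCont_nonneg hf (inv_nonneg.2 (zero_le_one.trans hu))
  set m := ⌊u ^ 2⌋₊
  set F : ℕ → ℝ := fun k => f (k / n)
  set q : ℕ → ℤ := fun k => (roundingScheme F a b m n k).1
  set mid := Ioc m (n - m - 1)
  have hbern : 1 + 1 / (4 * n * u⁻¹ ^ 2) ≤ 5 / 4 := by
    rw [hun]
    field_simp
    nlinarith
  have hm : (m : ℝ) ≤ n * u⁻¹ := by
    rw [hun]
    field_simp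
    exact Nat.floor_le (by positivity)
  calc |f x - ∑ k ∈ range (n + 1), (q k : ℝ) * bernsteinBasis n k x|
      = |(f x - ∑ k ∈ range (n + 1), F k * bernsteinBasis n k x) +
          (∑ k ∈ range (n + 1) \ mid, (F k - q k) * bernsteinBasis n k x +
            ∑ k ∈ mid, (F k - q k) * bernsteinBasis n k x)| := by
        rw [sum_sdiff fun k hk => by simp [mid] at hk ⊢; omega]
        simp only [sub_mul, sum_sub_distrib]
        rw [sub_add_sub_cancel]
    _ ≤ 5 / 4 * modCont f u⁻¹ + (modCont f u⁻¹ + 3 / (2 * u)) := by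
        refine (abs_add_le _ _).trans (add_le_add ?_ ((abs_add_le _ _).trans (add_le_add ?_ ?_)))
        · exact (abs_sub_sum_mul_bernsteinBasis_le hf hn (by positivity) hx).trans
            (mul_le_mul_of_nonneg_right hbern hω)
        · exact abs_sum_mul_bernsteinBasis_le sdiff_subset hω
            (fun k hk => abs_sub_roundingScheme_fst_le hf ha hb hn hm hk) hx
        · exact abs_sum_sub_roundingScheme_fst_mul_le (by positivity) hx
    _ ≤ 9 / 4 * modCont f u⁻¹ + 2 * u⁻¹ := by
        field_simp
        linarith

end LatticeApproximation

lemma distBernLattice_le {f : ℝ → ℝ} {n : ℕ} {e : ℝ} (q : ℕ → ℤ)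
    (h : ∀ x ∈ Set.Icc (0:ℝ) 1,
      |f x - ∑ k ∈ range (n + 1), (q k : ℝ) * bernsteinBasis n k x| ≤ e) :
    distBernLattice f n ≤ e :=
  csInf_le ⟨0, fun _ ⟨q', hq'⟩ => (abs_nonneg _).trans (hq' 0 (by simp))⟩ ⟨q, h⟩

theorem main_theorem (f : ℝ → ℝ) (hf : ContinuousOn f (Set.Icc (0:ℝ) 1))
    (hf0 : ∃ a : ℤ, f 0 = (a : ℝ)) (hf1 : ∃ b : ℤ, f 1 = (b : ℝ))
    (n : ℕ) (hn : 1 ≤ n) :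
    distBernLattice f n
      ≤ 9 / 4 * modCont f ((n : ℝ) ^ (-(1/3 : ℝ))) + 2 * (n : ℝ) ^ (-(1/3 : ℝ)) := by
  obtain ⟨a, ha⟩ := hf0
  obtain ⟨b, hb⟩ := hf1
  have hu : 1 ≤ (n : ℝ) ^ (1/3 : ℝ) := one_le_rpow (by exact_mod_cast hn) (by norm_num)
  have hun : (n : ℝ) = ((n : ℝ) ^ (1/3 : ℝ)) ^ 3 := by
    rw [← rpow_natCast, ← rpow_mul n.cast_nonneg]
    norm_num
  rw [rpow_neg n.cast_nonneg]
  exact distBernLattice_le _ fun x hx => abs_sub_sum_roundingScheme_mul_bernsteinBasis_le hf ha hb hu hun hx
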